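/- arXiv:1803.02054 — 3 statements merged into one kernel-verified Lean document; each statement's English description precedes it below -/
import Mathlib

section
/- Let x = (x_0, x_1, x_2, …) be an admissible sequence of positive integers, and let n ≥ 1. If the shifted sequence σ^k x is not admissible for every 1 ≤ k ≤ n−1, while σ^n x is admissible, then x_n ≥ n. -/
open Finset

/-- A finite string `(i₀, …, i_{k-1})` of positive integers is *admissible* if
`i_l ≤ i₀ + i₁ + ⋯ + i_{l-1}` for every `1 ≤ l ≤ k - 1`. -/
def StrAdmissible (l : List ℕ+) : Prop :=
  ∀ (k : ℕ) (h : k + 1 < l.length),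
    ((l.get ⟨k + 1, h⟩ : ℕ+) : ℕ) ≤ ((l.take (k + 1)).map fun i => (i : ℕ)).sum

/-- An infinite sequence `(x₀, x₁, …)` of positive integers is *admissible* if every
initial string is admissible, i.e. `x_{l+1} ≤ x₀ + ⋯ + x_l` for all `l`. -/
def SeqAdmissible (x : ℕ → ℕ+) : Prop :=
  ∀ k : ℕ, ((x (k + 1) : ℕ+) : ℕ) ≤ ∑ j ∈ Finset.range (k + 1), ((x j : ℕ+) : ℕ)

/-! For `1 ≤ k < n`, the failure of admissibility of `σᵏ x` gives an index `m > k` with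
`x m > x k + ⋯ + x (m-1) ≥ x k + (m - k - 1)`, and `m ≤ n` because admissibility of `σⁿ x`
bounds every later `x m` by `x n + ⋯ + x (m-1)`. Chaining these jumps from `k = 1` up to `n`
gives `x n ≥ x 1 + (n - 1) ≥ n`. -/

lemma seqAdmissible_shift_iff (x : ℕ → ℕ+) (k : ℕ) :
    SeqAdmissible (fun j => x (j + k)) ↔
      ∀ m, k < m → ((x m : ℕ+) : ℕ) ≤ ∑ j ∈ Ico k m, ((x j : ℕ+) : ℕ) := by
  have reindex : ∀ l, ∑ j ∈ range (l + 1), ((x (j + k) : ℕ+) : ℕ) =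
      ∑ j ∈ Ico k (l + 1 + k), ((x j : ℕ+) : ℕ) := fun l => by
    rw [range_eq_Ico, sum_Ico_add' (fun j => ((x j : ℕ+) : ℕ)), zero_add]
  constructor
  · intro h m hkm
    obtain ⟨l, rfl⟩ : ∃ l, m = l + 1 + k := ⟨m - k - 1, by omega⟩
    simpa only [reindex] using h l
  · intro h l
    simpa only [reindex] using h (l + 1 + k) (by omega)

lemma exists_sum_Ico_lt_of_not_seqAdmissible_shift {x : ℕ → ℕ+} {k : ℕ}
    (h : ¬ SeqAdmissible fun j => x (j + k)) :
    ∃ m, k < m ∧ ∑ j ∈ Ico k m, ((x j : ℕ+) : ℕ) < ((x m : ℕ+) : ℕ) := by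
  simpa only [seqAdmissible_shift_iff, not_forall, not_le, exists_prop] using h

lemma le_sum_Ico_of_seqAdmissible_shift {x : ℕ → ℕ+} {k n m : ℕ}
    (h : SeqAdmissible fun j => x (j + n)) (hkn : k ≤ n) (hnm : n < m) :
    ((x m : ℕ+) : ℕ) ≤ ∑ j ∈ Ico k m, ((x j : ℕ+) : ℕ) :=
  ((seqAdmissible_shift_iff x n).1 h m hnm).trans
    (sum_le_sum_of_subset (Ico_subset_Ico hkn le_rfl))

lemma add_sub_le_of_sum_Ico_lt {x : ℕ → ℕ+} {k m : ℕ} (hkm : k < m)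
    (h : ∑ j ∈ Ico k m, ((x j : ℕ+) : ℕ) < ((x m : ℕ+) : ℕ)) :
    ((x k : ℕ+) : ℕ) + (m - k) ≤ ((x m : ℕ+) : ℕ) := by
  have tail : #(Ico (k + 1) m) • 1 ≤ ∑ j ∈ Ico (k + 1) m, ((x j : ℕ+) : ℕ) :=
    card_nsmul_le_sum _ _ _ fun j _ => (x j).pos
  rw [sum_eq_sum_Ico_succ_bot hkm] at h
  rw [Nat.card_Ico, smul_eq_mul, mul_one] at tail
  omega

lemma add_sub_le_of_forall_exists_jump {f : ℕ → ℕ} {a n : ℕ}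
    (h : ∀ k, a ≤ k → k < n → ∃ m, k < m ∧ m ≤ n ∧ f k + (m - k) ≤ f m) :
    ∀ k, a ≤ k → k ≤ n → f k + (n - k) ≤ f n := by
  intro k hak hkn
  induction hd : n - k using Nat.strong_induction_on generalizing k with
  | _ d ih =>
    rcases hkn.eq_or_lt with rfl | hkn
    · omega
    obtain ⟨m, hkm, hmn, hjump⟩ := h k hak hkn
    have := ih (n - m) (by omega) m (by omega) hmn rfl
    omega

theorem entry_ge_of_first_admissible_shift_general (x : ℕ → ℕ+)
    (n : ℕ)
    (hnot : ∀ k, 1 ≤ k → k ≤ n - 1 → ¬ SeqAdmissible fun j => x (j + k))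
    (hyes : SeqAdmissible fun j => x (j + n)) :
    n ≤ ((x n : ℕ+) : ℕ) := by
  have jump : ∀ k, 1 ≤ k → k < n →
      ∃ m, k < m ∧ m ≤ n ∧ ((x k : ℕ+) : ℕ) + (m - k) ≤ ((x m : ℕ+) : ℕ) := by
    intro k hk hkn
    obtain ⟨m, hkm, hm⟩ :=
      exists_sum_Ico_lt_of_not_seqAdmissible_shift (hnot k hk (by omega))
    refine ⟨m, hkm, ?_, add_sub_le_of_sum_Ico_lt hkm hm⟩
    by_contra! hnm
    exact (le_sum_Ico_of_seqAdmissible_shift hyes hkn.le hnm).not_gt hm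
  rcases Nat.eq_zero_or_pos n with rfl | hn
  · exact Nat.zero_le _
  have := add_sub_le_of_forall_exists_jump jump 1 le_rfl hn
  have := (x 1).pos
  omega

/-- If `x` is an admissible sequence of positive integers, `n ≥ 1`,
the shifted sequence `σᵏ x` is not admissible for every `1 ≤ k ≤ n - 1`, while `σⁿ x`
is admissible, then `xₙ ≥ n`. -/
theorem entry_ge_of_first_admissible_shift (x : ℕ → ℕ+) (hx : SeqAdmissible x)
    (n : ℕ) (hn : 1 ≤ n)
    (hnot : ∀ k, 1 ≤ k → k ≤ n - 1 → ¬ SeqAdmissible fun j => x (j + k))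
    (hyes : SeqAdmissible fun j => x (j + n)) :
    n ≤ ((x n : ℕ+) : ℕ) :=
  entry_ge_of_first_admissible_shift_general x n hnot hyes
end

section
/- Let (i_0, i_1, …, i_{n-1}) be an admissible string of positive integers with n ≥ 2, and suppose that for every 1 ≤ k ≤ n−2 the suffix (i_k, …, i_{n-1}) is not admissible. Then i_{n-1} ≥ n − 1; in particular, when i_0 = 1 the length satisfies n ≤ i_{n-1} − i_0 + 2. -/
/-!
Every entry of a string is at least `1`, so if the suffix starting at position `k` is not
admissible, some later position `k + m + 1` carries an entry exceeding `i_k + m`: the entries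
grow at least as fast as the position. Chaining such jumps from position `1` to the last
position gives `i_{n-1} ≥ i_1 + (n - 2) ≥ n - 1`.
-/

open Finset

theorem exists_lt_getElem_of_not_strAdmissible {a : ℕ+} {t : List ℕ+}
    (h : ¬ StrAdmissible (a :: t)) : ∃ (k : ℕ) (_ : k < t.length), (a : ℕ) + k < t[k] := by
  simp only [StrAdmissible, not_forall, not_le] at h
  obtain ⟨k, hk, hlt⟩ := h
  rw [List.length_cons] at hk
  refine ⟨k, by omega, ?_⟩
  have hsum := List.length_le_sum_of_one_le ((t.take k).map PNat.val) fun _ hi => by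
    obtain ⟨i, -, rfl⟩ := List.mem_map.1 hi
    exact i.pos
  rw [List.length_map, List.length_take_of_le (by omega)] at hsum
  -- `StrAdmissible` coerces `l.take (k + 1)` to `List ℕ` through the list monad (`bind`/`pure`)
  simp only [List.get_eq_getElem, List.getElem_cons_succ, List.take_succ_cons, List.pure_def,
    List.bind_eq_flatMap, List.map_id_fun', id_eq, ← List.map_eq_flatMap, List.map_cons,
    List.sum_cons] at hlt
  omega

theorem head_add_length_le_getLast_of_forall_drop_not_strAdmissible (l : List ℕ+) (hne : l ≠ [])
    (h : ∀ j, j + 2 ≤ l.length → ¬ StrAdmissible (l.drop j)) :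
    (l.head hne : ℕ) + (l.length - 1) ≤ l.getLast hne := by
  match l, hne with
  | [a], _ => simp
  | a :: b :: t, _ =>
    obtain ⟨k, hk, hjump⟩ := exists_lt_getElem_of_not_strAdmissible (h 0 (by simp))
    have hne' : (b :: t).drop k ≠ [] := by simpa using hk
    have hrest := head_add_length_le_getLast_of_forall_drop_not_strAdmissible ((b :: t).drop k)
      hne' fun j hj => by
        simpa using h (k + j + 1) (by simp only [List.length_drop, List.length_cons] at hj ⊢; omega)
    simp only [List.head_drop, List.length_drop, List.getLast_drop, List.length_cons,
      List.head_cons, List.getLast_cons_cons] at hrest ⊢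
    omega
termination_by l.length

theorem length_bound_of_markov_partition_labels_general (l : List ℕ+) (hne : l ≠ [])
    (hsuf : ∀ k, 1 ≤ k → k ≤ l.length - 2 → ¬ StrAdmissible (l.drop k)) :
    l.length - 1 ≤ ((l.getLast hne : ℕ+) : ℕ) ∧
      ((l.head hne : ℕ+) = 1 →
        l.length ≤ ((l.getLast hne : ℕ+) : ℕ) - ((l.head hne : ℕ+) : ℕ) + 2) := by
  have hlast : l.length - 1 ≤ (l.getLast hne : ℕ) := by
    match l, hne with
    | [a], _ => simp
    | a :: b :: t, _ =>
      have htail := head_add_length_le_getLast_of_forall_drop_not_strAdmissible (b :: t)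
        (List.cons_ne_nil b t) fun j hj => by
          simpa using hsuf (j + 1) (by omega) (by simp only [List.length_cons] at hj ⊢; omega)
      have := b.pos
      simp only [List.head_cons, List.length_cons, List.getLast_cons_cons] at htail ⊢
      omega
  refine ⟨hlast, fun hhead => ?_⟩
  rw [hhead, PNat.one_coe]
  omega

/-- Let `(i₀, …, i_{n-1})` be an admissible string of positive
integers with `n ≥ 2` such that for every `1 ≤ k ≤ n - 2` the suffix `(i_k, …, i_{n-1})`
is not admissible. Then `i_{n-1} ≥ n - 1`; in particular when `i₀ = 1` the length
satisfies `n ≤ i_{n-1} - i₀ + 2`. -/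
theorem length_bound_of_markov_partition_labels (l : List ℕ+) (hne : l ≠ [])
    (hlen : 2 ≤ l.length) (hadm : StrAdmissible l)
    (hsuf : ∀ k, 1 ≤ k → k ≤ l.length - 2 → ¬ StrAdmissible (l.drop k)) :
    l.length - 1 ≤ ((l.getLast hne : ℕ+) : ℕ) ∧
      ((l.head hne : ℕ+) = 1 →
        l.length ≤ ((l.getLast hne : ℕ+) : ℕ) - ((l.head hne : ℕ+) : ℕ) + 2) :=
  length_bound_of_markov_partition_labels_general l hne hsuf
end

section
/- (Combinatorial mixing of admissible strings) For any two admissible strings u = (u_0, …, u_{p-1}) and v = (v_0, …, v_{q-1}) of positive integers, there exists N such that for every n ≥ N there is a string w of positive integers of length n for which the concatenation u⌢w⌢v is admissible. -/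
/-!
Pad with ones: `1` never exceeds the sum of a nonempty prefix, so `u ++ [1, …, 1]` stays
admissible, and once the ones outweigh `v` every letter of `v` is bounded by the sum of `u`
and the padding alone.
-/

open Finset

-- The coercion in `StrAdmissible` is elaborated as a lift through the list monad.
theorem strAdmissible_iff (l : List ℕ+) : StrAdmissible l ↔
    ∀ k (h : k + 1 < l.length), (l[k + 1] : ℕ) ≤ ((l.take (k + 1)).map PNat.val).sum := by
  have coe_lift (m : List ℕ+) : (m >>= fun a => pure (a : ℕ)) = m.map PNat.val :=
    List.flatMap_pure_eq_map _ m
  simp only [StrAdmissible, coe_lift, List.map_id', List.get_eq_getElem]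

theorem StrAdmissible.append_singleton {l : List ℕ+} {a : ℕ+} (hl : StrAdmissible l)
    (ha : l ≠ [] → (a : ℕ) ≤ (l.map PNat.val).sum) : StrAdmissible (l ++ [a]) := by
  rw [strAdmissible_iff] at hl ⊢
  intro k hk
  rw [List.length_append, List.length_singleton] at hk
  rcases Nat.lt_or_ge (k + 1) l.length with hlt | hge
  · rw [List.getElem_append_left hlt, List.take_append_of_le_length hlt.le]
    exact hl k hlt
  · have hlast : k + 1 = l.length := by omega
    have hne : l ≠ [] := List.ne_nil_of_length_pos (by omega)
    simpa [hlast] using ha hne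

theorem StrAdmissible.append_of_forall_le {l : List ℕ+} (hl : StrAdmissible l) {v : List ℕ+}
    (hv : ∀ a ∈ v, (a : ℕ) ≤ (l.map PNat.val).sum) : StrAdmissible (l ++ v) := by
  induction v using List.reverseRecOn with
  | nil => simpa
  | append_singleton v a ih =>
    rw [← List.append_assoc]
    refine (ih fun b hb => hv b (by simp [hb])).append_singleton fun _ => ?_
    calc (a : ℕ) ≤ (l.map PNat.val).sum := hv a (by simp)
      _ ≤ ((l ++ v).map PNat.val).sum := by simp

theorem StrAdmissible.append_replicate_one {l : List ℕ+} (hl : StrAdmissible l) (n : ℕ) :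
    StrAdmissible (l ++ List.replicate n 1) := by
  induction n with
  | zero => simpa
  | succ n ih =>
    rw [List.replicate_succ', ← List.append_assoc]
    refine ih.append_singleton fun hne => ?_
    have hpos : ∀ x ∈ (l ++ List.replicate n 1).map PNat.val, 0 < x := by
      simp only [List.mem_map]
      rintro _ ⟨b, -, rfl⟩
      exact b.pos
    exact List.sum_pos _ hpos (mt List.map_eq_nil_iff.mp hne)

theorem combinatorial_mixing_of_admissible_strings_general (u v : List ℕ+)
    (hu : StrAdmissible u) :
    ∃ N : ℕ, ∀ n : ℕ, N ≤ n → ∃ w : List ℕ+,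
      w.length = n ∧ StrAdmissible (u ++ w ++ v) := by
  refine ⟨(v.map PNat.val).sum, fun n hn => ⟨List.replicate n 1, List.length_replicate, ?_⟩⟩
  refine (hu.append_replicate_one n).append_of_forall_le fun a ha => ?_
  calc (a : ℕ) ≤ (v.map PNat.val).sum := List.le_sum_of_mem (List.mem_map_of_mem ha)
    _ ≤ n := hn
    _ ≤ _ := by simp

/-- **Combinatorial mixing of admissible strings.** For any two
admissible strings `u` and `v` of positive integers there is `N` such that for every
`n ≥ N` there is a string `w` of length `n` for which the concatenation `u ++ w ++ v`
is admissible. -/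
theorem combinatorial_mixing_of_admissible_strings (u v : List ℕ+)
    (hu : StrAdmissible u) (hv : StrAdmissible v) :
    ∃ N : ℕ, ∀ n : ℕ, N ≤ n → ∃ w : List ℕ+,
      w.length = n ∧ StrAdmissible (u ++ w ++ v) :=
  combinatorial_mixing_of_admissible_strings_general u v hu
end
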